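/- arXiv:math/0605306 — 2 statements merged into one kernel-verified Lean document; each statement's English description precedes it below -/
import Mathlib

section
/- Let ρ and σ be two well agreeing near weights on R, let f ∈ R \ {0}, and let I := (f) be the principal ideal of R generated by f. Then the sets H_x ∩ (ℕ² \ H(I)) and H_y ∩ (ℕ² \ H(I)) are both finite. -/
structure NearWeight (F R : Type*) [Field F] [CommRing R] [Algebra F R] where
  w : R → WithBot ℕ
  N0 : ∀ f : R, w f = ⊥ ↔ f = 0
  N1 : ∀ (c : F) (f : R), c ≠ 0 → w (c • f) = w f
  N2 : ∀ f g : R, w (f + g) ≤ max (w f) (w g)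
  N3 : ∀ f g h : R, w f < w g → w (f * h) ≤ w (g * h)
  N3' : ∀ f g h : R, w f < w g → w 1 < w h → w (f * h) < w (g * h)
  N4 : ∀ f g : R, w 1 < w f → w 1 < w g → w f = w g →
      ∃ c : F, c ≠ 0 ∧ w (f - c • g) < w f
  N5 : ∀ f g : R, w (f * g) ≤ w f + w g
  N5' : ∀ f g : R, w 1 < w f → w 1 < w g → w (f * g) = w f + w g
  norm0 : ∀ f : R, f ≠ 0 → w f ≤ w 1 → w f = 0
  normgcd : ∀ d : ℕ, (∀ f : R, w 1 < w f → ∃ k : ℕ, w f = ((d * k : ℕ) : WithBot ℕ)) → d = 1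

namespace NearWeight

variable {F R : Type*} [Field F] [CommRing R] [Algebra F R]

def U (ρ : NearWeight F R) : Set R := {r | ρ.w r ≤ ρ.w 1}

def M (ρ : NearWeight F R) : Set R := {r | ρ.w 1 < ρ.w r}

def nval (ρ : NearWeight F R) (f : R) : ℕ := WithBot.unbotD 0 (ρ.w f)

def Hset (ρ σ : NearWeight F R) (S : Set R) : Set (ℕ × ℕ) :=
  {p | ∃ f ∈ S, f ≠ 0 ∧ (ρ.nval f, σ.nval f) = p}

def WellAgreeing (ρ σ : NearWeight F R) : Prop :=
  (Hset ρ σ Set.univ)ᶜ.Finite ∧ ρ.U ∩ σ.U = Set.range (algebraMap F R)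

noncomputable def xH (ρ σ : NearWeight F R) (n : ℕ) : ℕ :=
  sInf {m | (m, n) ∈ Hset ρ σ Set.univ}

noncomputable def yH (ρ σ : NearWeight F R) (n : ℕ) : ℕ :=
  sInf {m | (n, m) ∈ Hset ρ σ Set.univ}

def lub (a b : ℕ × ℕ) : ℕ × ℕ := (max a.1 b.1, max a.2 b.2)

noncomputable def Gamma (ρ σ : NearWeight F R) : Set (ℕ × ℕ) :=
  {p | ∃ m : ℕ, p = (m, yH ρ σ m)} ∪ {p | ∃ n : ℕ, p = (xH ρ σ n, n)}

def Hbarx (ρ σ : NearWeight F R) : Set ℕ := {m | (m, 0) ∈ Hset ρ σ Set.univ}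

def Hbary (ρ σ : NearWeight F R) : Set ℕ := {n | (0, n) ∈ Hset ρ σ Set.univ}

noncomputable def GammaTilde (ρ σ : NearWeight F R) : Set (ℕ × ℕ) :=
  {p | ∃ m : ℕ, m ∉ Hbarx ρ σ ∧ p = (m, yH ρ σ m)}

def Delta (p : ℕ × ℕ) : Set (ℕ × ℕ) :=
  {q | (q.1 = p.1 ∧ q.2 < p.2) ∨ (q.2 = p.2 ∧ q.1 < p.1)}

noncomputable def tw (ρ : NearWeight F R) (f : R) : ℤ :=
  sInf {z : ℤ | ∃ g ∈ ρ.M, z = (ρ.nval (f * g) : ℤ) - (ρ.nval g : ℤ)}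

end NearWeight

variable {F R : Type*} [Field F] [CommRing R] [Algebra F R]

/-!
Well agreement yields an element `u` with `ρ u > 0 = σ u`. A descent on the `σ`-value inside
`(f) \ {0}`, which is stable under multiplication by such elements, produces `h ∈ (f)` with
`σ h = 0`: at a `σ`-minimal `h` with `σ h > 0`, axiom (N4) gives `c ∈ F` with
`σ (h (u - c)) < σ h`, and `u - c` is again such an element. If `ρ h = 0` then `h ∈ U_ρ ∩ U_σ = F`
is a unit and `(f) = R`; otherwise `h · v` realises `(ρ h + k, 0)` in `H((f))` whenever `v`
realises `(k, 0)` in `H`, and this holds for all large `k`. The `y`-axis is the same statement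
with `ρ` and `σ` exchanged.
-/

open Set

theorem exists_forall_lt_mem_of_finite_compl {S : Set (ℕ × ℕ)} (hS : Sᶜ.Finite) :
    ∃ B, ∀ m n, B < m → (m, n) ∈ S := by
  obtain ⟨B, hB⟩ := (hS.image Prod.fst).bddAbove
  exact ⟨B, fun m n hm => by_contra fun hmn => hm.not_ge (hB ⟨_, hmn, rfl⟩)⟩

namespace NearWeight

section Basic

variable (ρ : NearWeight F R) {f g : R}

theorem w_zero : ρ.w 0 = ⊥ := (ρ.N0 0).2 rfl

theorem w_eq_nval (hf : f ≠ 0) : ρ.w f = ρ.nval f := by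
  obtain ⟨n, hn⟩ := WithBot.ne_bot_iff_exists.1 (mt (ρ.N0 f).1 hf)
  simp [nval, ← hn]
  rfl

theorem ne_zero_of_mem_M (hf : f ∈ ρ.M) : f ≠ 0 := by
  rintro rfl
  exact not_lt_bot (α := WithBot ℕ) (ρ.w_zero ▸ hf : ρ.w 1 < ⊥)

theorem mul_ne_zero_of_mem_M (hf : f ≠ 0) (hg : g ∈ ρ.M) : f * g ≠ 0 := by
  have := ρ.N3' 0 f g (by rw [ρ.w_zero]; exact bot_lt_iff_ne_bot.2 (mt (ρ.N0 f).1 hf)) hg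
  rw [zero_mul, ρ.w_zero] at this
  exact mt (ρ.N0 _).2 this.ne'

theorem nval_mul_of_mem_M (hf : f ∈ ρ.M) (hg : g ∈ ρ.M) :
    ρ.nval (f * g) = ρ.nval f + ρ.nval g := by
  have := ρ.N5' f g hf hg
  rw [ρ.w_eq_nval (ρ.ne_zero_of_mem_M hf), ρ.w_eq_nval (ρ.ne_zero_of_mem_M hg)] at this
  rw [nval, this]
  rfl

theorem notMem_M_iff_mem_U : f ∉ ρ.M ↔ f ∈ ρ.U := not_lt (a := ρ.w 1)

theorem algebraMap_mem_U (c : F) : algebraMap F R c ∈ ρ.U := by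
  rcases eq_or_ne c 0 with rfl | hc
  · simp [U, ρ.w_zero]
  · simp [U, Algebra.algebraMap_eq_smul_one, ρ.N1 c 1 hc]

theorem add_algebraMap_mem_U (hf : f ∈ ρ.U) (c : F) : f + algebraMap F R c ∈ ρ.U :=
  (ρ.N2 _ _).trans (max_le hf (ρ.algebraMap_mem_U c))

theorem add_algebraMap_mem_M (hf : f ∈ ρ.M) (c : F) : f + algebraMap F R c ∈ ρ.M := by
  by_contra h
  have := ρ.add_algebraMap_mem_U (ρ.notMem_M_iff_mem_U.1 h) (-c)
  rw [map_neg, add_neg_cancel_right] at this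
  exact ρ.notMem_M_iff_mem_U.2 this hf

variable [Nontrivial R]

theorem w_one : ρ.w 1 = 0 := ρ.norm0 1 one_ne_zero le_rfl

theorem mem_U_iff_nval_eq_zero (hf : f ≠ 0) : f ∈ ρ.U ↔ ρ.nval f = 0 := by
  simp [U, ρ.w_eq_nval hf, ρ.w_one]

theorem mem_M_iff_nval_pos (hf : f ≠ 0) : f ∈ ρ.M ↔ 0 < ρ.nval f := by
  simp [M, ρ.w_eq_nval hf, ρ.w_one]

theorem nval_eq_zero_of_mem_U (hf : f ∈ ρ.U) : ρ.nval f = 0 := by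
  rcases eq_or_ne f 0 with rfl | hf0
  · simp [nval, ρ.w_zero]
  · exact (ρ.mem_U_iff_nval_eq_zero hf0).1 hf

theorem mul_mem_U (hf : f ∈ ρ.U) (hg : g ∈ ρ.U) : f * g ∈ ρ.U :=
  calc ρ.w (f * g) ≤ ρ.w f + ρ.w g := ρ.N5 f g
    _ ≤ ρ.w 1 + ρ.w 1 := add_le_add hf hg
    _ = ρ.w 1 := by rw [ρ.w_one, add_zero]

end Basic

theorem Hset_swap (ρ σ : NearWeight F R) (S : Set R) :
    Hset σ ρ S = Prod.swap ⁻¹' Hset ρ σ S := by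
  ext ⟨m, n⟩
  simp [Hset, and_comm]

variable {ρ σ : NearWeight F R}

theorem exists_mem_U_of_forall_mul_mem [Nontrivial R] {S : Set R} (hS : S.Nonempty) {u : R}
    (hu : u ∈ ρ.M ∩ σ.U) (hmul : ∀ h ∈ S, ∀ v ∈ ρ.M ∩ σ.U, h * v ∈ S) : ∃ h ∈ S, h ∈ σ.U := by
  obtain ⟨h, hhS, hmin⟩ := (InvImage.wf σ.w wellFounded_lt).has_min S hS
  refine ⟨h, hhS, σ.notMem_M_iff_mem_U.1 fun hM => ?_⟩
  have hle : σ.w (h * u) ≤ σ.w h :=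
    calc σ.w (h * u) ≤ σ.w h + σ.w u := σ.N5 h u
      _ ≤ σ.w h + 0 := add_le_add_right (σ.w_one ▸ hu.2) _
      _ = σ.w h := add_zero _
  have heq : σ.w (h * u) = σ.w h := le_antisymm hle (not_lt.1 (hmin _ (hmul h hhS u hu)))
  obtain ⟨c, -, hc⟩ := σ.N4 (h * u) h (heq ▸ hM) hM heq
  have hv : u + algebraMap F R (-c) ∈ ρ.M ∩ σ.U :=
    ⟨ρ.add_algebraMap_mem_M hu.1 _, σ.add_algebraMap_mem_U hu.2 _⟩
  refine hmin _ (hmul h hhS _ hv) ?_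
  have hfac : h * (u + algebraMap F R (-c)) = h * u - c • h := by
    rw [map_neg, Algebra.smul_def]; ring
  change σ.w _ < σ.w h
  rw [hfac, ← heq]
  exact hc

theorem exists_mem_M_inter_U_of_ne_bot [Nontrivial R]
    (hU : ρ.U ∩ σ.U ⊆ range (algebraMap F R)) {u : R} (hu : u ∈ ρ.M ∩ σ.U)
    {I : Ideal R} (hI : I ≠ ⊥) : ∃ h ∈ I, h ∈ ρ.M ∩ σ.U := by
  have hS : ((I : Set R) \ {0}).Nonempty := Submodule.exists_mem_ne_zero_of_ne_bot hI
  obtain ⟨h, ⟨hhI, hh0⟩, hσ⟩ := exists_mem_U_of_forall_mul_mem hS hu fun h ⟨hhI, hh0⟩ v hv =>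
    ⟨I.mul_mem_right v hhI, ρ.mul_ne_zero_of_mem_M hh0 hv.1⟩
  by_cases hρ : h ∈ ρ.M
  · exact ⟨h, hhI, hρ, hσ⟩
  obtain ⟨c, rfl⟩ := hU ⟨ρ.notMem_M_iff_mem_U.1 hρ, hσ⟩
  have hc : c ≠ 0 := by rintro rfl; simp at hh0
  rw [I.eq_top_of_isUnit_mem hhI ((IsUnit.mk0 c hc).map _)]
  exact ⟨u, Submodule.mem_top, hu⟩

theorem finite_xAxis_diff_of_mem [Nontrivial R] (hfin : (Hset ρ σ univ)ᶜ.Finite) {I : Ideal R}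
    {h : R} (hhI : h ∈ I) (hh : h ∈ ρ.M ∩ σ.U) :
    ({p ∈ Hset ρ σ univ | p.2 = 0} ∩ (Hset ρ σ I)ᶜ).Finite := by
  obtain ⟨B, hB⟩ := exists_forall_lt_mem_of_finite_compl hfin
  refine ((finite_Iic (B + ρ.nval h)).prod (finite_singleton 0)).subset ?_
  rintro ⟨m, n⟩ ⟨⟨-, rfl : n = 0⟩, hm⟩
  refine ⟨mem_Iic.2 (not_lt.1 fun hlt => hm ?_), rfl⟩
  obtain ⟨v, -, hv0, hv⟩ := hB (m - ρ.nval h) 0 (by omega)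
  simp only [Prod.mk.injEq] at hv
  have hvM : v ∈ ρ.M := (ρ.mem_M_iff_nval_pos hv0).2 (by omega)
  have hvU : v ∈ σ.U := (σ.mem_U_iff_nval_eq_zero hv0).2 hv.2
  refine ⟨h * v, I.mul_mem_right v hhI, ρ.mul_ne_zero_of_mem_M (ρ.ne_zero_of_mem_M hh.1) hvM, ?_⟩
  rw [ρ.nval_mul_of_mem_M hh.1 hvM, σ.nval_eq_zero_of_mem_U (σ.mul_mem_U hh.2 hvU), hv.1]
  congr 1
  omega

namespace WellAgreeing

theorem nontrivial (hwa : WellAgreeing ρ σ) : Nontrivial R := by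
  obtain ⟨B, hB⟩ := exists_forall_lt_mem_of_finite_compl hwa.1
  obtain ⟨f, -, hf, -⟩ := hB (B + 1) 0 (lt_add_one B)
  exact nontrivial_of_ne f 0 hf

theorem symm (hwa : WellAgreeing ρ σ) : WellAgreeing σ ρ := by
  refine ⟨?_, by rw [inter_comm]; exact hwa.2⟩
  rw [Hset_swap, ← preimage_compl]
  exact hwa.1.preimage Prod.swap_injective.injOn

theorem exists_mem_M_inter_U [Nontrivial R] (hwa : WellAgreeing ρ σ) : ∃ u, u ∈ ρ.M ∩ σ.U := by
  obtain ⟨B, hB⟩ := exists_forall_lt_mem_of_finite_compl hwa.1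
  obtain ⟨u, -, hu, hval⟩ := hB (B + 1) 0 (lt_add_one B)
  simp only [Prod.mk.injEq] at hval
  exact ⟨u, (ρ.mem_M_iff_nval_pos hu).2 (hval.1 ▸ B.succ_pos),
    (σ.mem_U_iff_nval_eq_zero hu).2 hval.2⟩

theorem finite_xAxis_diff (hwa : WellAgreeing ρ σ) {I : Ideal R} (hI : I ≠ ⊥) :
    ({p ∈ Hset ρ σ univ | p.2 = 0} ∩ (Hset ρ σ I)ᶜ).Finite := by
  have := hwa.nontrivial
  obtain ⟨u, hu⟩ := hwa.exists_mem_M_inter_U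
  obtain ⟨h, hhI, hh⟩ := exists_mem_M_inter_U_of_ne_bot hwa.2.subset hu hI
  exact finite_xAxis_diff_of_mem hwa.1 hhI hh

theorem finite_yAxis_diff (hwa : WellAgreeing ρ σ) {I : Ideal R} (hI : I ≠ ⊥) :
    ({p ∈ Hset ρ σ univ | p.1 = 0} ∩ (Hset ρ σ I)ᶜ).Finite := by
  refine ((hwa.symm.finite_xAxis_diff hI).preimage Prod.swap_injective.injOn).subset ?_
  simp only [Hset_swap σ ρ]
  intro p hp
  simpa using hp

end WellAgreeing

end NearWeight

theorem stmt12_general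
    (ρ σ : NearWeight F R) (hwa : NearWeight.WellAgreeing ρ σ)
    (f : R) (hf : f ≠ 0) :
    ({p ∈ NearWeight.Hset ρ σ Set.univ | p.2 = 0} ∩
      (NearWeight.Hset ρ σ ((Ideal.span {f} : Ideal R) : Set R))ᶜ).Finite ∧
    ({p ∈ NearWeight.Hset ρ σ Set.univ | p.1 = 0} ∩
      (NearWeight.Hset ρ σ ((Ideal.span {f} : Ideal R) : Set R))ᶜ).Finite := by
  have hI : Ideal.span {f} ≠ ⊥ := by rwa [ne_eq, Ideal.span_singleton_eq_bot]
  exact ⟨hwa.finite_xAxis_diff hI, hwa.finite_yAxis_diff hI⟩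

theorem stmt12
    (hinj : Function.Injective (algebraMap F R))
    (hsur : ¬ Function.Surjective (algebraMap F R))
    (ρ σ : NearWeight F R) (hwa : NearWeight.WellAgreeing ρ σ)
    (f : R) (hf : f ≠ 0) :
    ({p ∈ NearWeight.Hset ρ σ Set.univ | p.2 = 0} ∩
      (NearWeight.Hset ρ σ ((Ideal.span {f} : Ideal R) : Set R))ᶜ).Finite ∧
    ({p ∈ NearWeight.Hset ρ σ Set.univ | p.1 = 0} ∩
      (NearWeight.Hset ρ σ ((Ideal.span {f} : Ideal R) : Set R))ᶜ).Finite :=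
  stmt12_general ρ σ hwa f hf
end

section
/- Let ρ and σ be two well agreeing near weights on R and let f ∈ R \ {0}. Then there exists g ∈ M_ρ such that fg ∈ M_ρ. -/
variable {F R : Type*} [Field F] [CommRing R] [Algebra F R]

/-! Since `H` contains all but finitely many points `(m, 0)`, there is `u ∈ M_ρ` with `σ(u) = 0`.
If `f ∈ M_ρ`, or `f ∈ U_ρ ∩ U_σ = F` is a nonzero scalar, then `g = u` works. Otherwise choose
`g ∈ M_ρ` with `σ(fg)` minimal. If `σ(fg) > 0`, then `h = gu ∈ M_ρ` has `σ(fh) ≤ σ(fg)`, so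
`σ(fh) = σ(fg)` and (N4) gives `c` with `σ(f(g - ch)) < σ(fg)`; as `ρ(g) < ρ(h)`, also
`g - ch ∈ M_ρ`, contradicting minimality. Hence `fg ∈ U_σ`: either `fg ∈ M_ρ`, or `fg` is a nonzero
scalar (`f ∈ M_σ` is not a zero divisor by (N3)) and `g²` works. -/

namespace NearWeight

section

variable (τ : NearWeight F R)

lemma w_eq_nval_s16 {x : R} (hx : x ≠ 0) : τ.w x = τ.nval x := by
  obtain ⟨n, hn⟩ := WithBot.ne_bot_iff_exists.mp fun h => hx ((τ.N0 x).mp h)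
  rw [nval, ← hn, WithBot.unbotD_coe]
  rfl

lemma w_one_s16 [Nontrivial R] : τ.w 1 = 0 :=
  τ.norm0 1 one_ne_zero le_rfl

lemma w_neg (x : R) : τ.w (-x) = τ.w x := by
  simpa using τ.N1 (-1) x (by norm_num)

lemma w_sub_of_lt {a b : R} (h : τ.w a < τ.w b) : τ.w (a - b) = τ.w b := by
  refine le_antisymm ?_ ?_
  · simpa [sub_eq_add_neg, τ.w_neg, h.le] using τ.N2 a (-b)
  · have hb := τ.N2 (a - b) (-a)
    rw [τ.w_neg, show a - b + -a = -b by ring, τ.w_neg] at hb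
    exact (le_max_iff.mp hb).resolve_right h.not_ge

lemma notMem_M_iff {x : R} : x ∉ τ.M ↔ x ∈ τ.U :=
  not_lt (a := τ.w 1)

lemma ne_zero_of_mem_M_s16 {g : R} (hg : g ∈ τ.M) : g ≠ 0 := by
  rintro rfl
  exact not_lt_bot (((τ.N0 0).mpr rfl ▸ hg : τ.w 1 < ⊥))

lemma mul_ne_zero_of_w_one_lt {f g : R} (hf : τ.w 1 < τ.w f) (hg : g ≠ 0) : f * g ≠ 0 := by
  intro hfg
  have h := τ.N3 1 f g hf
  rw [one_mul, hfg, (τ.N0 0).mpr rfl, le_bot_iff, τ.N0] at h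
  exact hg h

lemma w_lt_w_mul [Nontrivial R] {g h : R} (hg : g ∈ τ.M) (hh : h ∈ τ.M) :
    τ.w g < τ.w (g * h) := by
  rw [τ.N5' g h hg hh]
  have hg0 : (0 : WithBot ℕ) < τ.w g := τ.w_one_s16 ▸ hg
  have hh0 : (0 : WithBot ℕ) < τ.w h := τ.w_one_s16 ▸ hh
  obtain ⟨a, ha⟩ := WithBot.ne_bot_iff_exists.mp hg0.ne_bot
  obtain ⟨b, hb⟩ := WithBot.ne_bot_iff_exists.mp hh0.ne_bot
  rw [← hb] at hh0
  rw [← ha, ← hb]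
  exact_mod_cast Nat.lt_add_of_pos_right (WithBot.coe_pos.mp hh0)

lemma mul_mem_M [Nontrivial R] {g h : R} (hg : g ∈ τ.M) (hh : h ∈ τ.M) : g * h ∈ τ.M :=
  lt_trans hg (τ.w_lt_w_mul hg hh)

end

variable {ρ σ : NearWeight F R}

lemma exists_mem_M_w_eq_zero [Nontrivial R] (hH : (Hset ρ σ Set.univ)ᶜ.Finite) :
    ∃ u ∈ ρ.M, σ.w u = 0 := by
  have hfin : ((fun m : ℕ => (m, 0)) ⁻¹' (Hset ρ σ Set.univ)ᶜ).Finite :=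
    hH.preimage (Prod.mk_left_injective 0).injOn
  obtain ⟨m, hm, hm0⟩ := hfin.infinite_compl.exists_gt 0
  obtain ⟨u, -, hu, huv⟩ : (m, 0) ∈ Hset ρ σ Set.univ := by simpa using hm
  rw [Prod.mk.injEq] at huv
  refine ⟨u, ?_, ?_⟩
  · show ρ.w 1 < ρ.w u
    rw [ρ.w_one_s16, ρ.w_eq_nval_s16 hu, huv.1]
    exact_mod_cast hm0
  · rw [σ.w_eq_nval_s16 hu, huv.2]
    rfl

lemma mul_mem_M_of_mem_U (hU : ρ.U ∩ σ.U = Set.range (algebraMap F R)) {x g : R} (hx : x ≠ 0)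
    (hxρ : x ∈ ρ.U) (hxσ : x ∈ σ.U) (hg : g ∈ ρ.M) : x * g ∈ ρ.M := by
  obtain ⟨c, rfl⟩ : x ∈ Set.range (algebraMap F R) := hU ▸ ⟨hxρ, hxσ⟩
  have hc : c ≠ 0 := by
    rintro rfl
    exact hx (map_zero _)
  show ρ.w 1 < ρ.w (algebraMap F R c * g)
  rwa [← Algebra.smul_def, ρ.N1 c g hc]

lemma exists_mem_M_w_mul_lt [Nontrivial R] {u : R} (huM : u ∈ ρ.M) (hσu : σ.w u = 0) {f g : R}
    (hgM : g ∈ ρ.M) (hfg : σ.w 1 < σ.w (f * g)) : ∃ g' ∈ ρ.M, σ.w (f * g') < σ.w (f * g) := by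
  have hhM : g * u ∈ ρ.M := ρ.mul_mem_M hgM huM
  have hfh : σ.w (f * (g * u)) ≤ σ.w (f * g) :=
    calc σ.w (f * (g * u)) = σ.w (f * g * u) := by rw [mul_assoc]
      _ ≤ σ.w (f * g) + σ.w u := σ.N5 _ _
      _ = σ.w (f * g) := by rw [hσu, add_zero]
  rcases hfh.lt_or_eq with hlt | heq
  · exact ⟨g * u, hhM, hlt⟩
  obtain ⟨c, hc, hlt⟩ := σ.N4 (f * g) (f * (g * u)) hfg (heq ▸ hfg) heq.symm
  refine ⟨g - c • (g * u), ?_, by rwa [mul_sub, mul_smul_comm]⟩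
  have hgh : ρ.w g < ρ.w (c • (g * u)) := (ρ.N1 c _ hc).symm ▸ ρ.w_lt_w_mul hgM huM
  show ρ.w 1 < ρ.w (g - c • (g * u))
  rwa [ρ.w_sub_of_lt hgh, ρ.N1 c _ hc]

lemma exists_mem_M_mul_mem_U [Nontrivial R] {u : R} (huM : u ∈ ρ.M) (hσu : σ.w u = 0) (f : R) :
    ∃ g ∈ ρ.M, f * g ∈ σ.U := by
  obtain ⟨g, hgM, hmin⟩ :=
    (InvImage.wf (fun g => σ.w (f * g)) wellFounded_lt).has_min ρ.M ⟨u, huM⟩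
  refine ⟨g, hgM, σ.notMem_M_iff.mp fun hfg => ?_⟩
  obtain ⟨g', hg'M, hlt⟩ := exists_mem_M_w_mul_lt huM hσu hgM hfg
  exact hmin g' hg'M hlt

end NearWeight

theorem stmt16_general
    (ρ σ : NearWeight F R) (hwa : NearWeight.WellAgreeing ρ σ)
    (f : R) (hf : f ≠ 0) :
    ∃ g ∈ ρ.M, f * g ∈ ρ.M := by
  have : Nontrivial R := nontrivial_of_ne f 0 hf
  obtain ⟨u, huM, hσu⟩ := NearWeight.exists_mem_M_w_eq_zero hwa.1
  by_cases hfM : f ∈ ρ.M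
  · exact ⟨u, huM, ρ.mul_mem_M hfM huM⟩
  have hfρ : f ∈ ρ.U := ρ.notMem_M_iff.mp hfM
  by_cases hfσ : f ∈ σ.U
  · exact ⟨u, huM, NearWeight.mul_mem_M_of_mem_U hwa.2 hf hfρ hfσ huM⟩
  obtain ⟨g, hgM, hfgσ⟩ := NearWeight.exists_mem_M_mul_mem_U huM hσu f
  by_cases hfgρ : f * g ∈ ρ.M
  · exact ⟨g, hgM, hfgρ⟩
  have hfg : f * g ≠ 0 := σ.mul_ne_zero_of_w_one_lt (not_le.mp hfσ) (ρ.ne_zero_of_mem_M_s16 hgM)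
  refine ⟨g * g, ρ.mul_mem_M hgM hgM, ?_⟩
  rw [← mul_assoc]
  exact NearWeight.mul_mem_M_of_mem_U hwa.2 hfg (ρ.notMem_M_iff.mp hfgρ) hfgσ hgM

theorem stmt16
    (hinj : Function.Injective (algebraMap F R))
    (hsur : ¬ Function.Surjective (algebraMap F R))
    (ρ σ : NearWeight F R) (hwa : NearWeight.WellAgreeing ρ σ)
    (f : R) (hf : f ≠ 0) :
    ∃ g ∈ ρ.M, f * g ∈ ρ.M :=
  stmt16_general ρ σ hwa f hf
end
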